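/- arXiv:1712.02387 — 5 statements merged into one kernel-verified Lean document; each statement's English description precedes it below -/
import Mathlib

section
/- Let f : ℝ⁴ → ℝ be given by f(x,u,p,q) = (6p/u + 3/x)·q − 6p³/u² − 6p²/(x·u) − 6p/x² − 6u/x³ on the open set where x ≠ 0 and u ≠ 0. Then the relative invariant I₃ = 4 f_q³ + 18 f_q (f_p − D_x f_q) + 9 D_x² f_q − 27 D_x f_p + 54 f_u vanishes identically on this set. -/
/-- Partial derivative with respect to the first variable `x`. -/
noncomputable def pX (g : ℝ → ℝ → ℝ → ℝ → ℝ) (x u p q : ℝ) : ℝ :=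
  deriv (fun t => g t u p q) x

/-- Partial derivative with respect to the second variable `u`. -/
noncomputable def pU (g : ℝ → ℝ → ℝ → ℝ → ℝ) (x u p q : ℝ) : ℝ :=
  deriv (fun t => g x t p q) u

/-- Partial derivative with respect to the third variable `p`. -/
noncomputable def pP (g : ℝ → ℝ → ℝ → ℝ → ℝ) (x u p q : ℝ) : ℝ :=
  deriv (fun t => g x u t q) p

/-- Partial derivative with respect to the fourth variable `q`. -/
noncomputable def pQ (g : ℝ → ℝ → ℝ → ℝ → ℝ) (x u p q : ℝ) : ℝ :=
  deriv (fun t => g x u p t) q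

/-- The total derivative operator
`D_x = ∂/∂x + p ∂/∂u + q ∂/∂p + f ∂/∂q` associated with the ODE `u''' = f`. -/
noncomputable def Dx (f g : ℝ → ℝ → ℝ → ℝ → ℝ) : ℝ → ℝ → ℝ → ℝ → ℝ :=
  fun x u p q =>
    pX g x u p q + p * pU g x u p q + q * pP g x u p q + f x u p q * pQ g x u p q

/-- The right hand side of the nonlinear ODE of Example 3.1:
`u''' = (6u'/u + 3/x)u'' − 6u'³/u² − 6u'²/(xu) − 6u'/x² − 6u/x³`. -/
noncomputable def f : ℝ → ℝ → ℝ → ℝ → ℝ := fun x u p q =>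
  (6 * p / u + 3 / x) * q - 6 * p ^ 3 / u ^ 2 - 6 * p ^ 2 / (x * u)
    - 6 * p / x ^ 2 - 6 * u / x ^ 3

/-!
`f` is affine in `q` with slope `6p/u + 3/x`, so every derivative entering `I₃` is a rational
function regular on `x ≠ 0, u ≠ 0`. Computing `f_q, f_p, f_u, D_x f_q, D_x² f_q, D_x f_p` in closed
form reduces `I₃ = 0` to an identity of rational functions. Since `D_x` only sees a function near
the point, the closed form of `D_x f_q`, valid on `x u ≠ 0` only, can be differentiated again there.
-/

lemma deriv_congr_of_ne {F G : ℝ → ℝ} {a : ℝ} (ha : a ≠ 0) (h : ∀ t, t ≠ 0 → F t = G t) :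
    deriv F a = deriv G a :=
  Filter.EventuallyEq.deriv_eq <| by
    filter_upwards [eventually_ne_nhds ha] with t ht using h t ht

lemma Dx_congr {F g G : ℝ → ℝ → ℝ → ℝ → ℝ}
    (h : ∀ x u p q, x ≠ 0 → u ≠ 0 → g x u p q = G x u p q)
    {x u p q : ℝ} (hx : x ≠ 0) (hu : u ≠ 0) : Dx F g x u p q = Dx F G x u p q := by
  have hX : pX g x u p q = pX G x u p q := deriv_congr_of_ne hx fun t ht => h t u p q ht hu
  have hU : pU g x u p q = pU G x u p q := deriv_congr_of_ne hu fun t ht => h x t p q hx ht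
  have hP : pP g x u p q = pP G x u p q := congrArg (deriv · p) (funext fun t => h x u t q hx hu)
  have hQ : pQ g x u p q = pQ G x u p q := congrArg (deriv · q) (funext fun t => h x u p t hx hu)
  simp only [Dx, hX, hU, hP, hQ]

lemma pQ_f : pQ f = fun x u p _ => 6 * p / u + 3 / x := by
  ext x u p q
  simp (disch := first | fun_prop (disch := simp [*]) | simp [*]) only [pQ, f, deriv_fun_sub,
    deriv_fun_mul, deriv_fun_pow, deriv_const', deriv_const_mul_id', deriv_div_const]
  ring

lemma pP_f :
    pP f = fun x u p q => 6 * q / u - 18 * p ^ 2 / u ^ 2 - 12 * p / (x * u) - 6 / x ^ 2 := by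
  ext x u p q
  simp (disch := first | fun_prop (disch := simp [*]) | simp [*]) only [pP, f, deriv_fun_add,
    deriv_fun_sub, deriv_fun_mul, deriv_fun_pow, deriv_const', deriv_id'', deriv_const_mul_id',
    deriv_div_const]
  ring

lemma pU_f {x u p q : ℝ} (hx : x ≠ 0) (hu : u ≠ 0) :
    pU f x u p q = -6 * p * q / u ^ 2 + 12 * p ^ 3 / u ^ 3 + 6 * p ^ 2 / (x * u ^ 2) - 6 / x ^ 3 := by
  simp (disch := first | fun_prop (disch := simp [*]) | simp [*]) only [pU, f, deriv_fun_add,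
    deriv_fun_sub, deriv_fun_mul, deriv_fun_div, deriv_fun_pow, deriv_const', deriv_id'',
    deriv_const_mul_id', deriv_const_div_id]
  field_simp
  ring

lemma Dx_pQ_f {x u p q : ℝ} (hx : x ≠ 0) (hu : u ≠ 0) :
    Dx f (pQ f) x u p q = 6 * q / u - 6 * p ^ 2 / u ^ 2 - 3 / x ^ 2 := by
  rw [pQ_f]
  simp (disch := first | fun_prop (disch := simp [*]) | simp [*]) only [Dx, pX, pU, pP, pQ,
    deriv_fun_add, deriv_fun_mul, deriv_fun_div, deriv_const', deriv_const_mul_id',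
    deriv_const_div_id]
  field_simp
  ring

lemma Dx_Dx_pQ_f {x u p q : ℝ} (hx : x ≠ 0) (hu : u ≠ 0) :
    Dx f (Dx f (pQ f)) x u p q = 18 * p * q / u ^ 2 + 18 * q / (x * u) - 24 * p ^ 3 / u ^ 3
      - 36 * p ^ 2 / (x * u ^ 2) - 36 * p / (x ^ 2 * u) - 30 / x ^ 3 := by
  rw [Dx_congr (fun _ _ _ _ => Dx_pQ_f) hx hu]
  simp (disch := first | fun_prop (disch := simp [*]) | simp [*]) only [Dx, pX, pU, pP, pQ, f,
    deriv_fun_sub, deriv_fun_mul, deriv_fun_div, deriv_fun_pow, deriv_const', deriv_id'',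
    deriv_const_mul_id', deriv_const_div_id]
  field_simp
  ring

lemma Dx_pP_f {x u p q : ℝ} (hx : x ≠ 0) (hu : u ≠ 0) :
    Dx f (pP f) x u p q = -6 * p * q / u ^ 2 + 6 * q / (x * u) - 24 * p ^ 2 / (x * u ^ 2)
      - 24 * p / (x ^ 2 * u) - 24 / x ^ 3 := by
  rw [pP_f]
  simp (disch := first | fun_prop (disch := simp [*]) | simp [*]) only [Dx, pX, pU, pP, pQ, f,
    deriv_fun_sub, deriv_fun_mul, deriv_fun_div, deriv_fun_pow, deriv_const', deriv_id'',
    deriv_const_mul_id', deriv_const_div_id]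
  field_simp
  ring

/-- For `f` of Example 3.1, the relative invariant
`I₃ = 4 f_q³ + 18 f_q (f_p − Dₓ f_q) + 9 Dₓ² f_q − 27 Dₓ f_p + 54 f_u`
vanishes identically on the set `x ≠ 0`, `u ≠ 0`. -/
theorem I3_vanishes_example1 :
    ∀ x u p q : ℝ, x ≠ 0 → u ≠ 0 →
      4 * (pQ f x u p q) ^ 3
        + 18 * pQ f x u p q * (pP f x u p q - Dx f (pQ f) x u p q)
        + 9 * Dx f (Dx f (pQ f)) x u p q
        - 27 * Dx f (pP f) x u p q
        + 54 * pU f x u p q = 0 := by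
  intro x u p q hx hu
  rw [Dx_Dx_pQ_f hx hu, Dx_pP_f hx hu, Dx_pQ_f hx hu, pU_f hx hu, pQ_f, pP_f]
  field_simp
  ring
end

section
/- Let I ⊆ ℝ be an open interval with 0 ∉ I, and let u : I → ℝ be three times differentiable with u(x) ≠ 0 for all x ∈ I, satisfying on I the nonlinear ODE u''' = (6u'/u + 3/x)·u'' − 6u'³/u² − 6u'²/(x·u) − 6u'/x² − 6u/x³. Then there exist real constants a, b, c such that −1/(x·u(x)) = a·x² + b·x + c for all x ∈ I; in particular the function v(x) = −1/(x·u(x)) satisfies v'''(x) = 0 on I. -/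
/-!
With `w = x·u`, the ODE is equivalent to `w² w''' − 6 w w' w'' + 6 w'³ = 0`, and the left side
is `w⁴ (−1/w)'''`. So `v = −1/w` has vanishing third derivative, and on an interval such a
function is a quadratic polynomial.
-/

theorem IsOpen.exists_eq_add_of_hasDerivAt {𝕜 G : Type*} [RCLike 𝕜] [NormedAddCommGroup G]
    [NormedSpace 𝕜 G] {s : Set 𝕜} (hs : IsOpen s) (hs' : IsPreconnected s) {f g f' : 𝕜 → G}
    (hf : ∀ x ∈ s, HasDerivAt f (f' x) x) (hg : ∀ x ∈ s, HasDerivAt g (f' x) x) :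
    ∃ a, ∀ x ∈ s, f x = g x + a :=
  hs.exists_eq_add_of_deriv_eq hs'
    (fun x hx => (hf x hx).differentiableAt.differentiableWithinAt)
    (fun x hx => (hg x hx).differentiableAt.differentiableWithinAt)
    (fun x hx => by rw [(hf x hx).deriv, (hg x hx).deriv])

theorem IsOpen.exists_eq_quadratic_of_hasDerivAt {s : Set ℝ} (hs : IsOpen s)
    (hs' : IsPreconnected s) {f g h : ℝ → ℝ}
    (hf : ∀ x ∈ s, HasDerivAt f (g x) x) (hg : ∀ x ∈ s, HasDerivAt g (h x) x)
    (hh : ∀ x ∈ s, HasDerivAt h 0 x) :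
    ∃ a b c : ℝ, ∀ x ∈ s, f x = a * x ^ 2 + b * x + c := by
  obtain ⟨k, hk⟩ := hs.exists_eq_add_of_hasDerivAt hs' hh fun x _ => hasDerivAt_const x 0
  obtain ⟨b, hb⟩ := hs.exists_eq_add_of_hasDerivAt hs' hg (g := fun y => k * y) fun x hx => by
    simpa [hk x hx] using (hasDerivAt_id x).const_mul k
  obtain ⟨c, hc⟩ := hs.exists_eq_add_of_hasDerivAt hs' hf (g := fun y => k / 2 * y ^ 2 + b * y)
    fun x hx => by
      refine (((hasDerivAt_pow 2 x).const_mul (k / 2)).add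
        ((hasDerivAt_id x).const_mul b)).congr_deriv ?_
      rw [hb x hx]
      simp only [Nat.cast_ofNat]
      ring
  exact ⟨k / 2, b, c, hc⟩

theorem IsOpen.hasDerivAt_deriv {𝕜 F : Type*} [NontriviallyNormedField 𝕜] [NormedAddCommGroup F]
    [NormedSpace 𝕜 F] {s : Set 𝕜} (hs : IsOpen s) {f f' : 𝕜 → F} {f'' : F} {x : 𝕜}
    (hf : ∀ y ∈ s, HasDerivAt f (f' y) y) (hf' : HasDerivAt f' f'' x) (hx : x ∈ s) :
    HasDerivAt (deriv f) f'' x :=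
  hf'.congr_of_eventuallyEq <| Filter.eventuallyEq_of_mem (hs.mem_nhds hx) fun y hy =>
    (hf y hy).deriv

theorem HasDerivAt.id_mul {f : ℝ → ℝ} {f' x : ℝ} (hf : HasDerivAt f f' x) :
    HasDerivAt (fun y => y * f y) (f x + x * f') x := by
  simpa using (hasDerivAt_id x).fun_mul hf

section NegOneDiv

variable {w w₁ w₂ : ℝ → ℝ} {w₃ x : ℝ}

theorem HasDerivAt.neg_one_div (hw : HasDerivAt w (w₁ x) x) (hx : w x ≠ 0) :
    HasDerivAt (fun y => -1 / w y) (w₁ x / w x ^ 2) x :=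
  ((hasDerivAt_const x (-1 : ℝ)).fun_div hw hx).congr_deriv (by ring)

theorem HasDerivAt.neg_one_div_deriv (hw : HasDerivAt w (w₁ x) x) (hw₁ : HasDerivAt w₁ (w₂ x) x)
    (hx : w x ≠ 0) :
    HasDerivAt (fun y => w₁ y / w y ^ 2) ((w x * w₂ x - 2 * w₁ x ^ 2) / w x ^ 3) x := by
  refine (hw₁.fun_div (hw.fun_pow 2) (pow_ne_zero 2 hx)).congr_deriv ?_
  field_simp
  ring

theorem HasDerivAt.neg_one_div_deriv_deriv (hw : HasDerivAt w (w₁ x) x)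
    (hw₁ : HasDerivAt w₁ (w₂ x) x) (hw₂ : HasDerivAt w₂ w₃ x) (hx : w x ≠ 0) :
    HasDerivAt (fun y => (w y * w₂ y - 2 * w₁ y ^ 2) / w y ^ 3)
      ((w x ^ 2 * w₃ - 6 * w x * w₁ x * w₂ x + 6 * w₁ x ^ 3) / w x ^ 4) x := by
  refine (((hw.fun_mul hw₂).fun_sub ((hw₁.fun_pow 2).const_mul 2)).fun_div (hw.fun_pow 3)
    (pow_ne_zero 3 hx)).congr_deriv ?_
  field_simp
  ring

end NegOneDiv

noncomputable def odeRhs (x u p q : ℝ) : ℝ :=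
  (6 * p / u + 3 / x) * q - 6 * p ^ 3 / u ^ 2 - 6 * p ^ 2 / (x * u) - 6 * p / x ^ 2 - 6 * u / x ^ 3

/-- For `w = x u` we have `w' = u + x u'`, `w'' = 2u' + x u''`, `w''' = 3u'' + x u'''`, so the
right side is `w² w''' − 6 w w' w'' + 6 w'³`. -/
theorem mul_sub_odeRhs {x u : ℝ} (hx : x ≠ 0) (hu : u ≠ 0) (p q r : ℝ) :
    x ^ 3 * u ^ 2 * (r - odeRhs x u p q) = (x * u) ^ 2 * (3 * q + x * r)
      - 6 * (x * u) * (u + x * p) * (2 * p + x * q) + 6 * (u + x * p) ^ 3 := by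
  unfold odeRhs
  field_simp
  ring

/-- If `u` is a three times differentiable solution, on an open interval `I` not
containing `0` and with `u ≠ 0` on `I`, of the nonlinear ODE
`u''' = (6u'/u + 3/x)u'' − 6u'³/u² − 6u'²/(xu) − 6u'/x² − 6u/x³`,
then `−1/(x·u(x))` is a quadratic polynomial `a x² + b x + c` on `I`;
in particular `v(x) = −1/(x·u(x))` satisfies `v''' = 0` on `I`. -/
theorem solution_example1 (I : Set ℝ) (hI : IsOpen I) (hconv : Convex ℝ I)
    (h0 : (0 : ℝ) ∉ I) (u : ℝ → ℝ)
    (hu0 : ∀ x ∈ I, u x ≠ 0)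
    (hu1 : ∀ x ∈ I, DifferentiableAt ℝ u x)
    (hu2 : ∀ x ∈ I, DifferentiableAt ℝ (deriv u) x)
    (hu3 : ∀ x ∈ I, DifferentiableAt ℝ (deriv (deriv u)) x)
    (hode : ∀ x ∈ I, deriv (deriv (deriv u)) x
      = (6 * deriv u x / u x + 3 / x) * deriv (deriv u) x
        - 6 * (deriv u x) ^ 3 / (u x) ^ 2
        - 6 * (deriv u x) ^ 2 / (x * u x)
        - 6 * deriv u x / x ^ 2
        - 6 * u x / x ^ 3) :
    ∃ a b c : ℝ,
      (∀ x ∈ I, -1 / (x * u x) = a * x ^ 2 + b * x + c) ∧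
      (∀ x ∈ I, deriv (deriv (deriv (fun y => -1 / (y * u y)))) x = 0) := by
  have hx0 : ∀ x ∈ I, x ≠ 0 := fun x hx h => h0 (h ▸ hx)
  have hw0 : ∀ x ∈ I, x * u x ≠ 0 := fun x hx => mul_ne_zero (hx0 x hx) (hu0 x hx)
  let w : ℝ → ℝ := fun y => y * u y
  let w₁ : ℝ → ℝ := fun y => u y + y * deriv u y
  let w₂ : ℝ → ℝ := fun y => 2 * deriv u y + y * deriv (deriv u) y
  have hw : ∀ x ∈ I, HasDerivAt w (w₁ x) x := fun x hx => (hu1 x hx).hasDerivAt.id_mul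
  have hw₁ : ∀ x ∈ I, HasDerivAt w₁ (w₂ x) x := fun x hx =>
    ((hu1 x hx).hasDerivAt.fun_add (hu2 x hx).hasDerivAt.id_mul).congr_deriv (by ring)
  have hw₂ : ∀ x ∈ I, HasDerivAt w₂ (3 * deriv (deriv u) x + x * deriv (deriv (deriv u)) x) x :=
    fun x hx => (((hu2 x hx).hasDerivAt.const_mul 2).fun_add
      (hu3 x hx).hasDerivAt.id_mul).congr_deriv (by ring)
  have hv := fun x hx => (hw x hx).neg_one_div (hw0 x hx)
  have hv₁ := fun x hx => (hw x hx).neg_one_div_deriv (hw₁ x hx) (hw0 x hx)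
  have hv₂ : ∀ x ∈ I, HasDerivAt (fun y => (w y * w₂ y - 2 * w₁ y ^ 2) / w y ^ 3) 0 x :=
    fun x hx => ((hw x hx).neg_one_div_deriv_deriv (hw₁ x hx) (hw₂ x hx) (hw0 x hx)).congr_deriv
      (by rw [← mul_sub_odeRhs (hx0 x hx) (hu0 x hx), hode x hx, odeRhs, sub_self, mul_zero,
        zero_div])
  obtain ⟨a, b, c, habc⟩ := hI.exists_eq_quadratic_of_hasDerivAt hconv.isPreconnected hv hv₁ hv₂
  refine ⟨a, b, c, habc, fun x hx => ?_⟩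
  have hv' := fun y hy => hI.hasDerivAt_deriv hv (hv₁ y hy) hy
  exact (hI.hasDerivAt_deriv hv' (hv₂ x hx) hx).deriv
end

section
/- Let I ⊆ ℝ be an open interval and let u : I → ℝ be three times differentiable with 1 + u'(x) ≠ 0 for all x ∈ I, satisfying on I the nonlinear ODE u''' = 3u''²/(1+u'). Then there exist real constants a, b, c such that −x = a·(x + u(x))² + b·(x + u(x)) + c for all x ∈ I. -/
/-!
Along a solution put `X = x + u` and `p = X' = 1 + u'`. In the coordinates `x̄ = X`, `ū = -x`
one has `dū/dx̄ = -1/p` and `d²ū/dx̄² = p'/p³`, and the ODE `p p'' = 3 p'²` says exactly that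
`(p'/p³)' = 0`, i.e. `ū''' = 0`. Integrating three times on the interval gives `p'/p³ = a`,
then `-1/p = a X + b`, then `-x = (a/2) X² + b X + c`.
-/

theorem IsOpen.exists_eq_const_of_hasDerivAt_zero {𝕜 G : Type*} [RCLike 𝕜]
    [NormedAddCommGroup G] [NormedSpace 𝕜 G] {s : Set 𝕜} (hs : IsOpen s)
    (hs' : IsPreconnected s) {f : 𝕜 → G} (hf : ∀ x ∈ s, HasDerivAt f 0 x) :
    ∃ c, ∀ x ∈ s, f x = c :=
  hs.exists_is_const_of_deriv_eq_zero hs'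
    (fun x hx => (hf x hx).differentiableAt.differentiableWithinAt)
    (fun x hx => (hf x hx).deriv)

section Integration

variable {p p' X : ℝ → ℝ} {x : ℝ}

theorem hasDerivAt_div_pow_three_eq_zero {p'' : ℝ} (hp : HasDerivAt p (p' x) x)
    (hp' : HasDerivAt p' p'' x) (hx : p x ≠ 0) (hode : p'' = 3 * p' x ^ 2 / p x) :
    HasDerivAt (fun y => p' y / p y ^ 3) 0 x := by
  have hcube : HasDerivAt (fun y => p y ^ 3) (3 * p x ^ 2 * p' x) x := by
    simpa using hp.fun_pow 3
  refine (hp'.fun_div hcube (pow_ne_zero 3 hx)).congr_deriv ?_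
  rw [hode]
  field_simp
  ring

theorem hasDerivAt_neg_inv_sub_eq_zero {q a : ℝ} (hX : HasDerivAt X (p x) x)
    (hp : HasDerivAt p q x) (hx : p x ≠ 0) (hq : q = a * p x ^ 3) :
    HasDerivAt (fun y => -(p y)⁻¹ - a * X y) 0 x := by
  refine ((hp.inv hx).fun_neg.fun_sub (hX.const_mul a)).congr_deriv ?_
  rw [hq]
  field_simp
  ring

theorem hasDerivAt_neg_sub_quadratic_eq_zero {a b : ℝ} (hX : HasDerivAt X (p x) x)
    (hx : p x ≠ 0) (hb : a * X x + b = -(p x)⁻¹) :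
    HasDerivAt (fun y => -y - a / 2 * X y ^ 2 - b * X y) 0 x := by
  refine (((hasDerivAt_id x).neg.sub ((hX.pow 2).const_mul (a / 2))).sub
    (hX.const_mul b)).congr_deriv ?_
  have hlin : (a * X x + b) * p x = -1 := by rw [hb]; field_simp
  simp only [Nat.cast_ofNat]
  linear_combination -hlin

end Integration

/-- If `u` is a three times differentiable solution, on an open interval `I` with
`1 + u' ≠ 0` on `I`, of the nonlinear ODE `u''' = 3u''²/(1+u')`, then there are
constants `a, b, c` with `−x = a(x+u)² + b(x+u) + c` on `I`. -/
theorem solution_example2 (I : Set ℝ) (hI : IsOpen I) (hconv : Convex ℝ I)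
    (u : ℝ → ℝ)
    (hu0 : ∀ x ∈ I, 1 + deriv u x ≠ 0)
    (hu1 : ∀ x ∈ I, DifferentiableAt ℝ u x)
    (hu2 : ∀ x ∈ I, DifferentiableAt ℝ (deriv u) x)
    (hu3 : ∀ x ∈ I, DifferentiableAt ℝ (deriv (deriv u)) x)
    (hode : ∀ x ∈ I, deriv (deriv (deriv u)) x
      = 3 * (deriv (deriv u) x) ^ 2 / (1 + deriv u x)) :
    ∃ a b c : ℝ, ∀ x ∈ I,
      -x = a * (x + u x) ^ 2 + b * (x + u x) + c := by
  have hI' := hconv.isPreconnected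
  have hp (x) (hx : x ∈ I) : HasDerivAt (fun y => 1 + deriv u y) (deriv (deriv u) x) x :=
    (hu2 x hx).hasDerivAt.const_add 1
  have hX (x) (hx : x ∈ I) : HasDerivAt (fun y => y + u y) (1 + deriv u x) x :=
    (hasDerivAt_id x).add (hu1 x hx).hasDerivAt
  obtain ⟨a, ha⟩ := hI.exists_eq_const_of_hasDerivAt_zero hI' fun x hx =>
    hasDerivAt_div_pow_three_eq_zero (hp x hx) (hu3 x hx).hasDerivAt (hu0 x hx) (hode x hx)
  obtain ⟨b, hb⟩ := hI.exists_eq_const_of_hasDerivAt_zero hI' fun x hx =>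
    hasDerivAt_neg_inv_sub_eq_zero (p := fun y => 1 + deriv u y) (hX x hx) (hp x hx) (hu0 x hx)
      ((div_eq_iff (pow_ne_zero 3 (hu0 x hx))).1 (ha x hx))
  obtain ⟨c, hc⟩ := hI.exists_eq_const_of_hasDerivAt_zero hI' fun x hx =>
    hasDerivAt_neg_sub_quadratic_eq_zero (p := fun y => 1 + deriv u y) (a := a) (b := b)
      (hX x hx) (hu0 x hx) (by linarith [hb x hx])
  exact ⟨a / 2, b, c, fun x hx => by linarith [hc x hx]⟩
end

section
/- Let I ⊆ ℝ be an open interval, let a, b, c be real constants, and let u : I → ℝ be three times differentiable with 1 + u'(x) ≠ 0 for all x ∈ I, such that −x = a·(x + u(x))² + b·(x + u(x)) + c for all x ∈ I. Then u satisfies on I the nonlinear ODE u''' = 3u''²/(1+u'). -/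
/-!
Write `g x = x + u x`, so that `a g² + b g + c + x` vanishes on `I`, i.e. `g` inverts the quadratic
`t ↦ -(a t² + b t + c)`. Differentiating this identity three times and eliminating `a` and
`2 a g + b` between the three resulting equations leaves `g''' = 3 g''² / g'`; and `1 + u' = g'`,
`u'' = g''`, `u''' = g'''`.
-/

open Set

theorem HasDerivAt.eq_zero_of_eqOn_const {𝕜 F : Type*} [NontriviallyNormedField 𝕜]
    [NormedAddCommGroup F] [NormedSpace 𝕜 F] {f : 𝕜 → F} {f' C : F} {s : Set 𝕜} {x : 𝕜}
    (hs : IsOpen s) (hfs : EqOn f (fun _ => C) s) (hx : x ∈ s) (hf : HasDerivAt f f' x) :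
    f' = 0 :=
  hf.unique <| (hasDerivAt_const x C).congr_of_eventuallyEq <|
    hfs.eventuallyEq_of_mem (hs.mem_nhds hx)

theorem eq_of_implicit_quadratic_derivs {a K w p q : ℝ} (h₁ : K * w = -1)
    (h₂ : 2 * a * w ^ 2 + K * p = 0) (h₃ : 6 * a * w * p + K * q = 0) :
    q = 3 * p ^ 2 / w := by
  have hw : w ≠ 0 := by rintro rfl; simp at h₁
  rw [eq_div_iff hw]
  linear_combination (w * q - 3 * p ^ 2) * h₁ + 3 * w * p * h₂ - w ^ 2 * h₃

section QuadraticInverse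

variable {s : Set ℝ} {g g' g'' g''' : ℝ → ℝ} {a b c : ℝ}

theorem quadratic_inverse_first_deriv (hs : IsOpen s) (hg : ∀ x ∈ s, HasDerivAt g (g' x) x)
    (h : ∀ x ∈ s, a * g x ^ 2 + b * g x + c = -x) :
    ∀ x ∈ s, (2 * a * g x + b) * g' x = -1 := by
  intro x hx
  have hderiv : HasDerivAt (fun y => a * g y ^ 2 + b * g y + c + y)
      ((2 * a * g x + b) * g' x + 1) x := by
    refine (((((hg x hx).pow 2).const_mul a).add ((hg x hx).const_mul b)).add_const c).add
      (hasDerivAt_id' x) |>.congr_deriv ?_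
    ring
  have hzero := hderiv.eq_zero_of_eqOn_const hs (C := 0)
    (fun y hy => by simp only [h y hy]; ring) hx
  linarith

theorem quadratic_inverse_second_deriv (hs : IsOpen s) (hg : ∀ x ∈ s, HasDerivAt g (g' x) x)
    (hg' : ∀ x ∈ s, HasDerivAt g' (g'' x) x) (h : ∀ x ∈ s, a * g x ^ 2 + b * g x + c = -x) :
    ∀ x ∈ s, 2 * a * g' x ^ 2 + (2 * a * g x + b) * g'' x = 0 := by
  intro x hx
  have hderiv : HasDerivAt (fun y => (2 * a * g y + b) * g' y)
      (2 * a * g' x ^ 2 + (2 * a * g x + b) * g'' x) x := by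
    refine ((((hg x hx).const_mul (2 * a)).add_const b).mul (hg' x hx)).congr_deriv ?_
    ring
  exact hderiv.eq_zero_of_eqOn_const hs (quadratic_inverse_first_deriv hs hg h) hx

theorem quadratic_inverse_third_deriv (hs : IsOpen s) (hg : ∀ x ∈ s, HasDerivAt g (g' x) x)
    (hg' : ∀ x ∈ s, HasDerivAt g' (g'' x) x) (hg'' : ∀ x ∈ s, HasDerivAt g'' (g''' x) x)
    (h : ∀ x ∈ s, a * g x ^ 2 + b * g x + c = -x) :
    ∀ x ∈ s, 6 * a * g' x * g'' x + (2 * a * g x + b) * g''' x = 0 := by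
  intro x hx
  have hderiv : HasDerivAt (fun y => 2 * a * g' y ^ 2 + (2 * a * g y + b) * g'' y)
      (6 * a * g' x * g'' x + (2 * a * g x + b) * g''' x) x := by
    refine (((hg' x hx).pow 2).const_mul (2 * a)).add
      ((((hg x hx).const_mul (2 * a)).add_const b).mul (hg'' x hx)) |>.congr_deriv ?_
    ring
  exact hderiv.eq_zero_of_eqOn_const hs (quadratic_inverse_second_deriv hs hg hg' h) hx

theorem quadratic_inverse_ode (hs : IsOpen s) (hg : ∀ x ∈ s, HasDerivAt g (g' x) x)
    (hg' : ∀ x ∈ s, HasDerivAt g' (g'' x) x) (hg'' : ∀ x ∈ s, HasDerivAt g'' (g''' x) x)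
    (h : ∀ x ∈ s, a * g x ^ 2 + b * g x + c = -x) :
    ∀ x ∈ s, g''' x = 3 * g'' x ^ 2 / g' x := fun x hx =>
  eq_of_implicit_quadratic_derivs (quadratic_inverse_first_deriv hs hg h x hx)
    (quadratic_inverse_second_deriv hs hg hg' h x hx)
    (quadratic_inverse_third_deriv hs hg hg' hg'' h x hx)

end QuadraticInverse

theorem inverse_solution_example2_general (I : Set ℝ) (hI : IsOpen I)
    (a b c : ℝ) (u : ℝ → ℝ)
    (hu1 : ∀ x ∈ I, DifferentiableAt ℝ u x)
    (hu2 : ∀ x ∈ I, DifferentiableAt ℝ (deriv u) x)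
    (hu3 : ∀ x ∈ I, DifferentiableAt ℝ (deriv (deriv u)) x)
    (hsol : ∀ x ∈ I, -x = a * (x + u x) ^ 2 + b * (x + u x) + c) :
    ∀ x ∈ I, deriv (deriv (deriv u)) x
      = 3 * (deriv (deriv u) x) ^ 2 / (1 + deriv u x) :=
  quadratic_inverse_ode (g := fun x => x + u x) (g' := fun x => 1 + deriv u x) hI
    (fun x hx => (hasDerivAt_id' x).add (hu1 x hx).hasDerivAt)
    (fun x hx => (hu2 x hx).hasDerivAt.const_add 1)
    (fun x hx => (hu3 x hx).hasDerivAt)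
    (fun x hx => (hsol x hx).symm)

/-- If `u` is three times differentiable on an open interval `I`, with
`1 + u' ≠ 0` on `I`, and satisfies `−x = a(x+u)² + b(x+u) + c` on `I` for some
constants `a, b, c`, then `u` solves the nonlinear ODE `u''' = 3u''²/(1+u')` on `I`. -/
theorem inverse_solution_example2 (I : Set ℝ) (hI : IsOpen I) (hconv : Convex ℝ I)
    (a b c : ℝ) (u : ℝ → ℝ)
    (hu0 : ∀ x ∈ I, 1 + deriv u x ≠ 0)
    (hu1 : ∀ x ∈ I, DifferentiableAt ℝ u x)
    (hu2 : ∀ x ∈ I, DifferentiableAt ℝ (deriv u) x)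
    (hu3 : ∀ x ∈ I, DifferentiableAt ℝ (deriv (deriv u)) x)
    (hsol : ∀ x ∈ I, -x = a * (x + u x) ^ 2 + b * (x + u x) + c) :
    ∀ x ∈ I, deriv (deriv (deriv u)) x
      = 3 * (deriv (deriv u) x) ^ 2 / (1 + deriv u x) :=
  inverse_solution_example2_general I hI a b c u hu1 hu2 hu3 hsol
end

section
/- Let f : ℝ⁴ → ℝ be given by f(x,u,p,q) = (6p/u + 3/x)·q − 6p³/u² − 6p²/(x·u) − 6p/x² − 6u/x³ on the open set where x ≠ 0 and u ≠ 0. Then the function a₂(x,u,p) = −2p/(x·u³) − 1/(x²·u²) satisfies on this set the equation D_x a₂ = (1/2)·x·u²·a₂² + 4p²/(x·u⁴) + 2p/(x²·u³) + (3/2)/(x³·u²) − 2q/(x·u³). -/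
/-- Auxiliary function `a₂(x,u,p) = −2p/(xu³) − 1/(x²u²)`. -/
noncomputable def a2 : ℝ → ℝ → ℝ → ℝ → ℝ := fun x u p _q =>
  -(2 * p) / (x * u ^ 3) - 1 / (x ^ 2 * u ^ 2)

theorem hasDerivAt_const_div_pow {𝕜 : Type*} [NontriviallyNormedField 𝕜] (c : 𝕜) (n : ℕ)
    {t : 𝕜} (ht : t ≠ 0) : HasDerivAt (fun s => c / s ^ n) (-(n * c) / t ^ (n + 1)) t := by
  refine ((hasDerivAt_const t c).fun_div (hasDerivAt_pow n t) (pow_ne_zero n ht)).congr_deriv ?_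
  rcases n with _ | k
  · simp
  · rw [Nat.add_sub_cancel]
    field_simp
    ring

lemma pX_a2 {x : ℝ} (u p q : ℝ) (hx : x ≠ 0) :
    pX a2 x u p q = 2 * p / (x ^ 2 * u ^ 3) + 2 / (x ^ 3 * u ^ 2) := by
  have h := (hasDerivAt_const_div_pow (-(2 * p) / u ^ 3) 1 hx).fun_sub
    (hasDerivAt_const_div_pow (1 / u ^ 2) 2 hx)
  have ha2 : (fun t => a2 t u p q) = fun t => -(2 * p) / u ^ 3 / t ^ 1 - 1 / u ^ 2 / t ^ 2 := by
    funext t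
    simp only [a2]
    ring
  rw [pX, ha2, h.deriv]
  field_simp
  ring

lemma pU_a2 (x : ℝ) {u : ℝ} (p q : ℝ) (hu : u ≠ 0) :
    pU a2 x u p q = 6 * p / (x * u ^ 4) + 2 / (x ^ 2 * u ^ 3) := by
  have h := (hasDerivAt_const_div_pow (-(2 * p) / x) 3 hu).fun_sub
    (hasDerivAt_const_div_pow (1 / x ^ 2) 2 hu)
  have ha2 : (fun t => a2 x t p q) = fun t => -(2 * p) / x / t ^ 3 - 1 / x ^ 2 / t ^ 2 := by
    funext t
    simp only [a2]
    ring
  rw [pU, ha2, h.deriv]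
  field_simp
  ring

lemma pP_a2 (x u p q : ℝ) : pP a2 x u p q = -2 / (x * u ^ 3) := by
  have h := ((hasDerivAt_id p).const_mul (-2 / (x * u ^ 3))).sub_const (1 / (x ^ 2 * u ^ 2))
  have ha2 : (fun t => a2 x u t q) = fun t => -2 / (x * u ^ 3) * id t - 1 / (x ^ 2 * u ^ 2) := by
    funext t
    simp only [a2, id]
    ring
  rw [pP, ha2, h.deriv, mul_one]

lemma pQ_a2 (x u p q : ℝ) : pQ a2 x u p q = 0 :=
  deriv_const q _

/-- For `f` of Example 3.1, the function `a₂` satisfies the second auxiliary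
equation `Dₓ a₂ = (1/2) x u² a₂² + 4p²/(xu⁴) + 2p/(x²u³) + (3/2)/(x³u²) − 2q/(xu³)`
on the set `x ≠ 0`, `u ≠ 0`. -/
theorem second_auxiliary_equation_example1 :
    ∀ x u p q : ℝ, x ≠ 0 → u ≠ 0 →
      Dx f a2 x u p q
        = (1 / 2) * x * u ^ 2 * (a2 x u p q) ^ 2
          + 4 * p ^ 2 / (x * u ^ 4) + 2 * p / (x ^ 2 * u ^ 3)
          + (3 / 2) / (x ^ 3 * u ^ 2) - 2 * q / (x * u ^ 3) := by
  intro x u p q hx hu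
  rw [Dx, pX_a2 u p q hx, pU_a2 x p q hu, pP_a2, pQ_a2]
  simp only [a2]
  field_simp
  ring
end
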